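/- Let A1 : D → S be an allotment that induces no negative loop, and let s_j ∈ S. Let M = 1 + Σ_{d∈D, s∈S} |CM(d, s)| + Σ_{s∈S} Σ_{j=1}^{|D|+1} |p_s(j)|. Extend the instance by a new demand unit d* ∉ D with CM(d*, s_j) = 0 and CM(d*, s) = M for every s ≠ s_j, and let A2 : D ∪ {d*} → S extend A1 with A2(d*) = s_j (so the occupancy of s_j increases by one and every penalty transfer edge directed into s_j decreases in weight). Among all loops of A2 that begin at s_j and whose closing edge is a penalty transfer edge directed into s_j, let C_min be one of minimum cost. Then: (a) if cost(C_min) ≥ 0 (or no such loop exists), then A2 induces no negative loop; (b) if cost(C_min) < 0 and A3 is the allotment obtained from A2 by removing C_min, then A3 induces no negative loop. -/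

import Mathlib

open Finset

/-- Cyclic successor on `Fin n`. -/
def cnext {n : ℕ} (t : Fin n) : Fin n := ⟨(t.val + 1) % n, Nat.mod_lt _ t.pos⟩

section LBDD

variable {D S : Type*} [Fintype D] [DecidableEq D] [Fintype S] [DecidableEq S]

/-- Occupancy of a service center `s` under allotment `A`: the number of demand
units assigned to `s`. -/
def occ (A : D → S) (s : S) : ℕ := (Finset.univ.filter fun d => A d = s).card

/-- Total cost of an allotment: assignment costs plus accumulated per-allotment penalties. -/
def cost (CM : D → S → ℤ) (p : S → ℕ → ℤ) (A : D → S) : ℤ :=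
  (∑ d, CM d (A d)) + ∑ s, ∑ j ∈ Finset.Icc 1 (occ A s), p s j

/-- Weight of the penalty transfer edge from `si` to `sj` under allotment `A`. -/
def wpen (p : S → ℕ → ℤ) (A : D → S) (si sj : S) : ℤ :=
  p si (occ A si + 1) - p sj (occ A sj)

/-- A loop: a cyclic sequence of `m` edges; edge `t` is directed from `vtx t` to
`vtx (cnext t)`; if `dem t = some d` it is a transfer edge moving demand unit `d`,
and if `dem t = none` it is a penalty transfer edge. -/
structure Loop (S D : Type*) where
  m : ℕ
  vtx : Fin m → S
  dem : Fin m → Option D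

/-- `L` is a loop of allotment `A`: at least two pairwise distinct service centers,
each transfer edge moves a demand unit currently assigned to its tail, the demand
units are pairwise distinct, and there is at most one penalty transfer edge
(no penalty edge: type (i), a cycle of transfer edges; one penalty edge: type (ii),
a path of transfer edges closed by a penalty transfer edge). -/
def IsLoop (A : D → S) (L : Loop S D) : Prop :=
  2 ≤ L.m ∧ Function.Injective L.vtx ∧
  (∀ t d, L.dem t = some d → A d = L.vtx t) ∧
  (∀ t t' d, L.dem t = some d → L.dem t' = some d → t = t') ∧
  (∀ t t', L.dem t = none → L.dem t' = none → t = t')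

/-- Weight of edge `t` of loop `L`. -/
def edgeWt (CM : D → S → ℤ) (p : S → ℕ → ℤ) (A : D → S) (L : Loop S D) (t : Fin L.m) : ℤ :=
  match L.dem t with
  | some d => CM d (L.vtx (cnext t)) - CM d (L.vtx t)
  | none => wpen p A (L.vtx t) (L.vtx (cnext t))

/-- Cost of a loop: the sum of the weights of its edges. -/
def loopCost (CM : D → S → ℤ) (p : S → ℕ → ℤ) (A : D → S) (L : Loop S D) : ℤ :=
  ∑ t, edgeWt CM p A L t

/-- `A` induces a negative loop. -/
def InducesNegLoop (CM : D → S → ℤ) (p : S → ℕ → ℤ) (A : D → S) : Prop :=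
  ∃ L : Loop S D, IsLoop A L ∧ loopCost CM p A L < 0

/-- Removing a loop from `A`: for each transfer edge, reassign its demand unit
from the tail to the head of the edge. -/
noncomputable def removeLoop (A : D → S) (L : Loop S D) : D → S := fun x =>
  if h : ∃ t, L.dem t = some x then L.vtx (cnext (Classical.choose h)) else A x

end LBDD

/-!
Both parts follow from one optimality bound: if every loop of `A2` closing into `sj` costs at
least `κ ≤ 0`, then `cost A2 + κ ≤ cost B` for every allotment `B`. Removing a loop changes the
cost by exactly the cost of the loop, so an allotment of minimum cost has no negative loop; this
gives (a) with `κ = 0`, and (b) with `κ = cost Cmin`, because `cost A3 = cost A2 + cost Cmin`.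

If `B` moves `d*` away from `sj`, the bound holds because `M` exceeds everything `B` can save
elsewhere. Otherwise induct on the number of units that `B` and `A2` place differently. Their
difference contains a transfer cycle, or a transfer path from a center that `B` underfills to one
that it overfills, closed by a penalty edge; undoing this loop in `B` saves exactly its cost at the
undone allotment. As the penalty increments are nondecreasing, that cost is at least the cost of
the same loop for `A1`, which is nonnegative, except for the path that fills the last missing unit
of `sj`: it is compared with a loop of `A2` closing into `sj`, hence costs at least `κ`, and it
occurs at most once.
-/

theorem cnext_eq_add_one {n : ℕ} [NeZero n] (t : Fin n) : cnext t = t + 1 :=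
  Fin.ext (by simp [cnext, Fin.val_add])

theorem cnext_bijective (n : ℕ) : Function.Bijective (cnext : Fin n → Fin n) := by
  cases n with
  | zero => exact ⟨fun t => t.elim0, fun t => t.elim0⟩
  | succ n =>
    rw [show (cnext : Fin (n + 1) → Fin (n + 1)) = (· + 1) from funext cnext_eq_add_one]
    exact (Equiv.addRight 1).bijective

theorem cnext_ne {n : ℕ} (hn : 2 ≤ n) (t : Fin n) : cnext t ≠ t := by
  intro h
  have h' : (t.val + 1) % n = t.val := congrArg Fin.val h
  rcases Nat.lt_or_ge (t.val + 1) n with h1 | h1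
  · rw [Nat.mod_eq_of_lt h1] at h'; omega
  · rw [show t.val + 1 = n by omega, Nat.mod_self] at h'; omega

theorem neg_sum_abs_le_sub {S : Type*} [Fintype S] (f : S → ℤ) (x y : S) :
    -(∑ s, |f s|) ≤ f x - f y := by
  classical
  have hnn : ∀ s ∈ Finset.univ, 0 ≤ |f s| := fun s _ => abs_nonneg (f s)
  by_cases hxy : x = y
  · rw [hxy, sub_self, neg_nonpos]
    exact Finset.sum_nonneg hnn
  · have hpair := Finset.sum_pair (f := fun s => |f s|) hxy
    have hsub := Finset.sum_le_sum_of_subset_of_nonneg (Finset.subset_univ {x, y})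
      fun s hs _ => hnn s hs
    linarith [neg_abs_le (f x), le_abs_self (f y)]

theorem sum_penalty_of_move {S : Type*} [Fintype S] [DecidableEq S] (p : S → ℕ → ℤ)
    {o o' : S → ℕ} {sb si : S} (hne : sb ≠ si)
    (h : ∀ s, o' s + (if si = s then 1 else 0) = o s + if sb = s then 1 else 0) :
    ∑ s, ∑ j ∈ Finset.Icc 1 (o' s), p s j =
      ∑ s, ∑ j ∈ Finset.Icc 1 (o s), p s j + (p sb (o sb + 1) - p si (o si)) := by
  have hdiff : ∀ s, ∑ j ∈ Finset.Icc 1 (o' s), p s j - ∑ j ∈ Finset.Icc 1 (o s), p s j =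
      (if sb = s then p sb (o sb + 1) else 0) - if si = s then p si (o si) else 0 := by
    intro s
    have hs := h s
    by_cases hb : sb = s
    · subst hb
      rw [if_neg (Ne.symm hne), if_pos rfl] at hs
      rw [if_pos rfl, if_neg (Ne.symm hne), show o' sb = o sb + 1 by omega,
        Finset.sum_Icc_succ_top (by omega)]
      ring
    · by_cases hi : si = s
      · subst hi
        rw [if_pos rfl, if_neg hb] at hs
        rw [if_neg hb, if_pos rfl, show o si = o' si + 1 by omega,
          Finset.sum_Icc_succ_top (by omega)]
        ring
      · rw [if_neg hb, if_neg hi] at hs ⊢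
        rw [show o' s = o s by omega]
        ring
  have hsum := Finset.sum_congr rfl fun s (_ : s ∈ Finset.univ) => hdiff s
  rw [Finset.sum_sub_distrib, Finset.sum_sub_distrib, Finset.sum_ite_eq, Finset.sum_ite_eq,
    if_pos (Finset.mem_univ _), if_pos (Finset.mem_univ _)] at hsum
  linarith

theorem monotone_penalty {S : Type*} {c : S → ℕ} {p : S → ℕ → ℤ}
    (hp0 : ∀ s j, j ≤ c s → p s j = 0) (hppos : ∀ s j, c s < j → 0 < p s j)
    (hpmono : ∀ s j, c s < j → p s j ≤ p s (j + 1)) (s : S) : Monotone (p s) :=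
  monotone_nat_of_le_succ fun j => by
    rcases lt_trichotomy j (c s) with h | rfl | h
    · rw [hp0 s j h.le, hp0 s (j + 1) h]
    · rw [hp0 s _ le_rfl]
      exact (hppos s _ (Nat.lt_succ_self _)).le
    · exact hpmono s j h

section Loops

variable {E S : Type*} {A : E → S} {L : Loop S E}

theorem IsLoop.two_le (hL : IsLoop A L) : 2 ≤ L.m := hL.1

theorem IsLoop.vtx_ne_cnext (hL : IsLoop A L) (t : Fin L.m) : L.vtx t ≠ L.vtx (cnext t) :=
  fun h => cnext_ne hL.1 t (hL.2.1 h).symm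

theorem IsLoop.tail (hL : IsLoop A L) {t : Fin L.m} {e : E} (h : L.dem t = some e) :
    A e = L.vtx t := hL.2.2.1 t e h

theorem IsLoop.dem_inj (hL : IsLoop A L) {t t' : Fin L.m} {e : E} (h : L.dem t = some e)
    (h' : L.dem t' = some e) : t = t' := hL.2.2.2.1 t t' e h h'

theorem IsLoop.penalty_unique (hL : IsLoop A L) {t t' : Fin L.m} (h : L.dem t = none)
    (h' : L.dem t' = none) : t = t' := hL.2.2.2.2 t t' h h'

theorem IsLoop.exists_transfer (hL : IsLoop A L) : ∃ t e, L.dem t = some e := by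
  by_contra! h
  have h0 : L.dem ⟨0, by have := hL.two_le; omega⟩ = none :=
    Option.eq_none_iff_forall_ne_some.2 (h _)
  have h1 : L.dem ⟨1, hL.two_le⟩ = none := Option.eq_none_iff_forall_ne_some.2 (h _)
  exact absurd (congrArg Fin.val (hL.penalty_unique h0 h1)) (by simp)

theorem IsLoop.of_tail {X : E → S} (hL : IsLoop A L)
    (hX : ∀ t e, L.dem t = some e → X e = L.vtx t) : IsLoop X L :=
  ⟨hL.1, hL.2.1, hX, hL.2.2.2⟩

theorem removeLoop_of_dem [DecidableEq E] (hL : IsLoop A L) {t : Fin L.m} {e : E}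
    (h : L.dem t = some e) : removeLoop A L e = L.vtx (cnext t) := by
  have hex : ∃ t, L.dem t = some e := ⟨t, h⟩
  rw [removeLoop, dif_pos hex, hL.dem_inj (Classical.choose_spec hex) h]

theorem removeLoop_of_forall_ne [DecidableEq E] {e : E} (h : ∀ t, L.dem t ≠ some e) :
    removeLoop A L e = A e := by
  rw [removeLoop, dif_neg (not_exists.2 h)]

variable [Fintype E]

theorem occ_eq_sum [DecidableEq S] (A : E → S) (s : S) :
    (occ A s : ℤ) = ∑ e, if A e = s then 1 else 0 :=
  Finset.natCast_card_filter _ _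

theorem loopCost_eq [DecidableEq S] (CM : E → S → ℤ) (p : S → ℕ → ℤ) (A : E → S)
    (L : Loop S E) :
    loopCost CM p A L =
      (∑ t, (L.dem t).elim 0 fun e => CM e (L.vtx (cnext t)) - CM e (L.vtx t)) +
        ∑ t, if L.dem t = none then wpen p A (L.vtx t) (L.vtx (cnext t)) else 0 := by
  rw [loopCost, ← Finset.sum_add_distrib]
  refine Finset.sum_congr rfl fun t _ => ?_
  unfold edgeWt
  split <;> simp_all

variable [DecidableEq E]

theorem sum_removeLoop_sub {M : Type*} [AddCommGroup M] (hL : IsLoop A L) (g : E → S → M) :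
    ∑ e, g e (removeLoop A L e) - ∑ e, g e (A e) =
      ∑ t, (L.dem t).elim 0 fun e => g e (L.vtx (cnext t)) - g e (L.vtx t) := by
  have hpt : ∀ e, g e (removeLoop A L e) - g e (A e) =
      ∑ t, if L.dem t = some e then g e (L.vtx (cnext t)) - g e (L.vtx t) else 0 := by
    intro e
    by_cases he : ∃ t, L.dem t = some e
    · obtain ⟨t, ht⟩ := he
      rw [Finset.sum_eq_single t (fun t' _ ht' => if_neg fun h => ht' (hL.dem_inj h ht))
        (by simp), if_pos ht, removeLoop_of_dem hL ht, hL.tail ht]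
    · rw [removeLoop_of_forall_ne (not_exists.1 he), sub_self,
        Finset.sum_eq_zero fun t _ => if_neg (not_exists.1 he t)]
  rw [← Finset.sum_sub_distrib, Finset.sum_congr rfl fun e _ => hpt e, Finset.sum_comm]
  refine Finset.sum_congr rfl fun t _ => ?_
  rcases L.dem t with _ | d <;> simp

variable [DecidableEq S]

theorem occ_removeLoop (hL : IsLoop A L) (s : S) :
    (occ (removeLoop A L) s : ℤ) = occ A s + ∑ t, if L.dem t = none then
      ((if L.vtx t = s then 1 else 0) - if L.vtx (cnext t) = s then 1 else 0) else 0 := by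
  have h := sum_removeLoop_sub hL fun _ s' => if s' = s then (1 : ℤ) else 0
  have hrot : ∑ t, (if L.vtx (cnext t) = s then (1 : ℤ) else 0) =
      ∑ t, if L.vtx t = s then 1 else 0 :=
    (cnext_bijective _).sum_comp fun t => if L.vtx t = s then (1 : ℤ) else 0
  have hsplit : ∀ t, (L.dem t).elim (0 : ℤ) (fun _ =>
      (if L.vtx (cnext t) = s then 1 else 0) - if L.vtx t = s then 1 else 0) =
      ((if L.vtx (cnext t) = s then 1 else 0) - (if L.vtx t = s then 1 else 0)) +
      if L.dem t = none then
        ((if L.vtx t = s then 1 else 0) - if L.vtx (cnext t) = s then 1 else 0) else 0 := by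
    intro t
    rcases L.dem t with _ | d <;> simp
  rw [Finset.sum_congr rfl fun t _ => hsplit t, Finset.sum_add_distrib, Finset.sum_sub_distrib,
    hrot, sub_self, zero_add] at h
  rw [occ_eq_sum, occ_eq_sum, ← h]
  ring

theorem occ_removeLoop_add (hL : IsLoop A L) {t₀ : Fin L.m} (h₀ : L.dem t₀ = none) (s : S) :
    occ (removeLoop A L) s + (if L.vtx (cnext t₀) = s then 1 else 0) =
      occ A s + if L.vtx t₀ = s then 1 else 0 := by
  have h := occ_removeLoop hL s
  rw [Finset.sum_eq_single t₀ (fun t _ ht => if_neg fun h => ht (hL.penalty_unique h h₀))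
    (by simp), if_pos h₀] at h
  split_ifs at h ⊢ <;> omega

theorem occ_removeLoop_of_forall_ne_none (hL : IsLoop A L) (h : ∀ t, L.dem t ≠ none) (s : S) :
    occ (removeLoop A L) s = occ A s := by
  have h' := occ_removeLoop hL s
  rw [Finset.sum_eq_zero fun t _ => if_neg (h t)] at h'
  omega

variable [Fintype S]

theorem cost_removeLoop (CM : E → S → ℤ) (p : S → ℕ → ℤ) (hL : IsLoop A L) :
    cost CM p (removeLoop A L) = cost CM p A + loopCost CM p A L := by
  have htransfer := sum_removeLoop_sub hL CM
  have hpenalty : ∑ s, ∑ j ∈ Finset.Icc 1 (occ (removeLoop A L) s), p s j -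
      ∑ s, ∑ j ∈ Finset.Icc 1 (occ A s), p s j =
      ∑ t, if L.dem t = none then wpen p A (L.vtx t) (L.vtx (cnext t)) else 0 := by
    by_cases h : ∃ t₀, L.dem t₀ = none
    · obtain ⟨t₀, h₀⟩ := h
      rw [Finset.sum_eq_single t₀ (fun t _ ht => if_neg fun h => ht (hL.penalty_unique h h₀))
        (by simp), if_pos h₀, sum_penalty_of_move p (hL.vtx_ne_cnext t₀)
        (occ_removeLoop_add hL h₀), wpen]
      ring
    · have h' : ∀ t, L.dem t ≠ none := not_exists.1 h
      simp [h', occ_removeLoop_of_forall_ne_none hL h']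
  rw [cost, cost, loopCost_eq]
  linarith

theorem not_inducesNegLoop_of_forall_cost_le {CM : E → S → ℤ} {p : S → ℕ → ℤ}
    (h : ∀ B, cost CM p A ≤ cost CM p B) : ¬ InducesNegLoop CM p A := by
  rintro ⟨L, hL, hneg⟩
  have := h (removeLoop A L)
  rw [cost_removeLoop CM p hL] at this
  linarith

end Loops

section Comparison

variable {E S : Type*}

/-- The loop on the original demand units obtained by turning a transfer of `none` into a
penalty transfer edge. -/
def Loop.restrict (L : Loop S (Option E)) : Loop S E :=
  ⟨L.m, L.vtx, fun t => (L.dem t).bind id⟩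

theorem IsLoop.restrict {X : Option E → S} {L : Loop S (Option E)} (hL : IsLoop X L)
    (hnone : ∀ t, L.dem t ≠ some none) : IsLoop (fun e => X (some e)) L.restrict := by
  have hdem : ∀ t e, L.restrict.dem t = some e ↔ L.dem t = some (some e) := by
    intro t e
    simp only [Loop.restrict]
    rcases L.dem t with _ | _ | e' <;> simp
  refine ⟨hL.two_le, hL.2.1, fun t e h => hL.tail ((hdem t e).1 h),
    fun t t' e h h' => hL.dem_inj ((hdem t e).1 h) ((hdem t' e).1 h'), fun t t' h h' => ?_⟩
  have hn : ∀ t, L.restrict.dem t = none → L.dem t = none := by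
    intro t ht
    rcases hd : L.dem t with _ | _ | e
    · rfl
    · exact absurd hd (hnone t)
    · simp [Loop.restrict, hd] at ht
  exact hL.penalty_unique (hn t h) (hn t' h')

variable [Fintype E] [DecidableEq S] {p : S → ℕ → ℤ}

theorem wpen_le_wpen {E' : Type*} [Fintype E'] (hp : ∀ s, Monotone (p s)) {X : E → S}
    {Y : E' → S} {si sk : S} (hi : occ X si ≤ occ Y si) (hk : occ Y sk ≤ occ X sk) :
    wpen p X si sk ≤ wpen p Y si sk := by
  unfold wpen
  linarith [hp si (Nat.add_le_add_right hi 1), hp sk hk]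

theorem loopCost_le_loopCost (CM : E → S → ℤ) (hp : ∀ s, Monotone (p s)) {X Y : E → S}
    {L : Loop S E} (h : ∀ t, L.dem t = none →
      occ X (L.vtx t) ≤ occ Y (L.vtx t) ∧ occ Y (L.vtx (cnext t)) ≤ occ X (L.vtx (cnext t))) :
    loopCost CM p X L ≤ loopCost CM p Y L := by
  refine Finset.sum_le_sum fun t _ => ?_
  unfold edgeWt
  split
  · exact le_rfl
  · next ht => exact wpen_le_wpen hp (h t ht).1 (h t ht).2

theorem loopCost_restrict_le (CM : Option E → S → ℤ) (hp : ∀ s, Monotone (p s))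
    {X : Option E → S} {Y : E → S} {L : Loop S (Option E)} (hnone : ∀ t, L.dem t ≠ some none)
    (h : ∀ t, L.dem t = none →
      occ Y (L.vtx t) ≤ occ X (L.vtx t) ∧ occ X (L.vtx (cnext t)) ≤ occ Y (L.vtx (cnext t))) :
    loopCost (fun e => CM (some e)) p Y L.restrict ≤ loopCost CM p X L := by
  refine Finset.sum_le_sum fun t _ => ?_
  unfold edgeWt
  rcases hd : L.dem t with _ | _ | e
  · simp only [Loop.restrict, hd, Option.bind_none]
    exact wpen_le_wpen hp (h t hd).1 (h t hd).2
  · exact absurd hd (hnone t)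
  · simp [Loop.restrict, hd]

end Comparison

section Decomposition

variable {E S : Type*} {A B : E → S} {L : Loop S E}

def Loop.TransfersTo (B : E → S) (L : Loop S E) : Prop :=
  ∀ t e, L.dem t = some e → B e = L.vtx (cnext t)

theorem IsLoop.ne_of_transfersTo (hL : IsLoop A L) (hT : L.TransfersTo B) {t : Fin L.m} {e : E}
    (h : L.dem t = some e) : B e ≠ A e := by
  rw [hT t e h, hL.tail h]
  exact (hL.vtx_ne_cnext t).symm

theorem IsLoop.dem_ne_some_of_eq (hL : IsLoop A L) (hT : L.TransfersTo B) {e : E}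
    (he : B e = A e) (t : Fin L.m) : L.dem t ≠ some e :=
  fun h => hL.ne_of_transfersTo hT h he

/-- The walk `y 0, …, y (m - 1)` along the units `de (y i)`, closed into a cycle if `closed`,
and otherwise by a penalty transfer edge from `y (m - 1)` to `y 0`. -/
def seqLoop (y : ℕ → S) (de : S → E) (m : ℕ) (closed : Bool) : Loop S E where
  m := m
  vtx t := y t
  dem t := if closed ∨ t.val + 1 < m then some (de (y t)) else none

theorem seqLoop_spec {y : ℕ → S} {de : S → E} {m : ℕ} {closed : Bool} (hm : 2 ≤ m)
    (hinj : ∀ a < m, ∀ b < m, y a = y b → a = b)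
    (hstep : ∀ i < m, (closed ∨ i + 1 < m) →
      A (de (y i)) = y i ∧ B (de (y i)) = y ((i + 1) % m)) :
    IsLoop A (seqLoop y de m closed) ∧ (seqLoop y de m closed).TransfersTo B := by
  have hdem : ∀ t e, (seqLoop y de m closed).dem t = some e →
      (closed ∨ t.val + 1 < m) ∧ e = de (y t) := by
    intro t e h
    simp only [seqLoop] at h
    split_ifs at h with hc
    exact ⟨hc, (Option.some_inj.1 h).symm⟩
  refine ⟨⟨hm, fun a b h => Fin.ext (hinj a a.2 b b.2 h), fun t e h => ?_,
    fun t t' e h h' => ?_, fun t t' h h' => ?_⟩, fun t e h => ?_⟩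
  · obtain ⟨hc, rfl⟩ := hdem t e h
    exact (hstep t t.2 hc).1
  · obtain ⟨hc, rfl⟩ := hdem t e h
    obtain ⟨hc', he⟩ := hdem t' _ h'
    have hA := congrArg A he
    rw [(hstep t t.2 hc).1, (hstep t' t'.2 hc').1] at hA
    exact Fin.ext (hinj _ t.2 _ t'.2 hA)
  · simp only [seqLoop] at h h'
    split_ifs at h h' with hc hc'
    simp only [not_or] at hc hc'
    exact Fin.ext (by omega)
  · obtain ⟨hc, rfl⟩ := hdem t e h
    exact (hstep t t.2 hc).2

theorem exists_loop_of_path (x : ℕ → S) (de : S → E) {k : ℕ} (hk : k ≠ 0)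
    (hinj : ∀ a ≤ k, ∀ b ≤ k, x a = x b → a = b)
    (hstep : ∀ i < k, A (de (x i)) = x i ∧ B (de (x i)) = x (i + 1)) :
    ∃ L : Loop S E, IsLoop A L ∧ L.TransfersTo B ∧
      ∀ t, L.dem t = none → L.vtx t = x k ∧ L.vtx (cnext t) = x 0 := by
  obtain ⟨hL, hT⟩ := seqLoop_spec (A := A) (B := B) (y := x) (de := de) (m := k + 1)
    (closed := false) (by omega) (fun a ha b hb => hinj a (by omega) b (by omega))
    fun i hi hc => by
      rw [Nat.mod_eq_of_lt (hc.resolve_left (by simp))]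
      exact hstep i (by simpa using hc)
  refine ⟨_, hL, hT, fun t ht => ?_⟩
  have htk : t.val = k := by
    have ht2 : t.val < k + 1 := t.2
    by_contra hne
    have : (seqLoop x de (k + 1) false).dem t = some (de (x t)) := if_pos (Or.inr (by omega))
    simp [this] at ht
  exact ⟨congrArg x htk, show x ((t.val + 1) % (k + 1)) = x 0 by rw [htk, Nat.mod_self]⟩

theorem exists_loop_of_cycle (x : ℕ → S) (de : S → E) {j k : ℕ} (hjk : j + 2 ≤ k)
    (hinj : ∀ a < k, ∀ b < k, x a = x b → a = b)
    (hstep : ∀ i < k, j ≤ i → A (de (x i)) = x i ∧ B (de (x i)) = x (i + 1))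
    (hcyc : x k = x j) :
    ∃ L : Loop S E, IsLoop A L ∧ L.TransfersTo B ∧ ∀ t, L.dem t ≠ none := by
  obtain ⟨hL, hT⟩ := seqLoop_spec (A := A) (B := B) (y := fun i => x (j + i)) (de := de)
    (m := k - j) (closed := true) (by omega)
    (fun a ha b hb h => by have := hinj _ (by omega) _ (by omega) h; omega)
    fun i hi _ => by
      rw [(hstep (j + i) (by omega) (by omega)).2]
      refine ⟨(hstep (j + i) (by omega) (by omega)).1, ?_⟩
      rcases Nat.lt_or_ge (i + 1) (k - j) with h | h
      · rw [Nat.mod_eq_of_lt h]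
        rfl
      · rw [show i + 1 = k - j by omega, Nat.mod_self, show j + i + 1 = k by omega,
          Nat.add_zero, hcyc]
  exact ⟨_, hL, hT, fun t ht => by simp [seqLoop] at ht⟩

variable [Fintype E] [DecidableEq S]

theorem exists_leaving_of_occ_lt {v : S} (hv : occ B v < occ A v) : ∃ e, A e = v ∧ B e ≠ v := by
  by_contra! h
  refine hv.not_ge (Finset.card_le_card fun e he => ?_)
  simp only [Finset.mem_filter, Finset.mem_univ, true_and] at he ⊢
  exact h e he

theorem exists_leaving_of_entering {v : S} (hv : occ B v ≤ occ A v) (hin : ∃ e, B e = v ∧ A e ≠ v) :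
    ∃ e, A e = v ∧ B e ≠ v := by
  by_contra! h
  obtain ⟨e, hBe, hAe⟩ := hin
  refine hv.not_gt (Finset.card_lt_card ((Finset.ssubset_iff_of_subset fun e' he' => ?_).2
    ⟨e, by simpa using hBe, by simpa using hAe⟩))
  simp only [Finset.mem_filter, Finset.mem_univ, true_and] at he' ⊢
  exact h e' he'

theorem exists_walk {s₀ : S} (h₀ : ∃ e, A e = s₀ ∧ B e ≠ s₀) :
    ∃ (x : ℕ → S) (de : S → E), x 0 = s₀ ∧ ∀ i, (∀ j ≤ i, occ B (x j) ≤ occ A (x j)) →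
      A (de (x i)) = x i ∧ B (de (x i)) = x (i + 1) ∧ x (i + 1) ≠ x i := by
  have ⟨e₀, _⟩ := h₀
  have hde : ∀ v, ∃ e, (∃ e, A e = v ∧ B e ≠ v) → A e = v ∧ B e ≠ v := fun v => by
    by_cases h : ∃ e, A e = v ∧ B e ≠ v
    · obtain ⟨e, he⟩ := h
      exact ⟨e, fun _ => he⟩
    · exact ⟨e₀, fun h' => absurd h' h⟩
  choose de hde using hde
  set x : ℕ → S := fun i => (fun v => B (de v))^[i] s₀
  have hx : ∀ i, x (i + 1) = B (de (x i)) := fun i => Function.iterate_succ_apply' _ _ _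
  refine ⟨x, de, rfl, fun i => ?_⟩
  induction i with
  | zero =>
    intro _
    obtain ⟨h1, h2⟩ := hde s₀ h₀
    exact ⟨h1, (hx 0).symm, by rw [hx]; exact h2⟩
  | succ i ih =>
    intro hle
    obtain ⟨h1, h2, h3⟩ := ih fun j hj => hle j (by omega)
    obtain ⟨h4, h5⟩ := hde _ (exists_leaving_of_entering (hle (i + 1) le_rfl)
      ⟨de (x i), h2, by rw [h1]; exact h3.symm⟩)
    exact ⟨h4, (hx _).symm, by rw [hx]; exact h5⟩

variable [Fintype S]

theorem sum_occ (A : E → S) : ∑ s, occ A s = Fintype.card E :=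
  (Finset.card_eq_sum_card_fiberwise fun _ _ => Finset.mem_univ _).symm

theorem exists_loop_of_walk (x : ℕ → S) (de : S → E)
    (hwalk : ∀ i, (∀ j ≤ i, occ B (x j) ≤ occ A (x j)) →
      A (de (x i)) = x i ∧ B (de (x i)) = x (i + 1) ∧ x (i + 1) ≠ x i)
    (h0 : occ B (x 0) ≤ occ A (x 0)) :
    ∃ L : Loop S E, IsLoop A L ∧ L.TransfersTo B ∧
      ∀ t, L.dem t = none → occ A (L.vtx t) < occ B (L.vtx t) ∧ L.vtx (cnext t) = x 0 := by
  classical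
  have hex : ∃ k, occ A (x k) < occ B (x k) ∨ ∃ j < k, x j = x k := by
    obtain ⟨a, b, hab, h⟩ := Fintype.exists_ne_map_eq_of_card_lt
      (fun i : Fin (Fintype.card S + 1) => x i) (by simp)
    rcases lt_or_gt_of_ne (Fin.val_ne_of_ne hab) with h' | h'
    · exact ⟨b, Or.inr ⟨a, h', h⟩⟩
    · exact ⟨a, Or.inr ⟨b, h', h.symm⟩⟩
  set k := Nat.find hex
  have hmin : ∀ i < k, occ B (x i) ≤ occ A (x i) ∧ ∀ j < i, x j ≠ x i := fun i hi => by
    have := Nat.find_min hex hi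
    push Not at this
    exact ⟨this.1, this.2⟩
  have hstep : ∀ i < k, A (de (x i)) = x i ∧ B (de (x i)) = x (i + 1) ∧ x (i + 1) ≠ x i :=
    fun i hi => hwalk i fun j hj => (hmin j (by omega)).1
  have hinj : ∀ a < k, ∀ b < k, x a = x b → a = b := by
    intro a ha b hb h
    by_contra hne
    rcases lt_or_gt_of_ne hne with h' | h'
    · exact (hmin b hb).2 a h' h
    · exact (hmin a ha).2 b h' h.symm
  by_cases hsur : occ A (x k) < occ B (x k)
  · have hk0 : k ≠ 0 := fun h => by rw [h] at hsur; omega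
    have hne : ∀ j < k, x j ≠ x k := fun j hj h => by
      have := (hmin j hj).1
      rw [h] at this
      omega
    obtain ⟨L, hL, hT, hpen⟩ := exists_loop_of_path x de hk0 (fun a ha b hb h => by
        rcases ha.lt_or_eq with ha | rfl <;> rcases hb.lt_or_eq with hb | rfl
        · exact hinj a ha b hb h
        · exact absurd h (hne a ha)
        · exact absurd h.symm (hne b hb)
        · rfl)
      fun i hi => ⟨(hstep i hi).1, (hstep i hi).2.1⟩
    exact ⟨L, hL, hT, fun t ht => by
      obtain ⟨h1, h2⟩ := hpen t ht
      exact ⟨h1 ▸ hsur, h2⟩⟩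
  · obtain ⟨j, hj, hjk⟩ := (Nat.find_spec hex).resolve_left hsur
    have hj2 : j + 2 ≤ k := by
      by_contra h
      have := (hstep j hj).2.2
      rw [show j + 1 = k by omega] at this
      exact this hjk.symm
    obtain ⟨L, hL, hT, hcyc⟩ := exists_loop_of_cycle x de hj2 hinj
      (fun i hi _ => ⟨(hstep i hi).1, (hstep i hi).2.1⟩) hjk.symm
    exact ⟨L, hL, hT, fun t ht => absurd ht (hcyc t)⟩

/- A walk from `s₀` stops only at an overfull center, whose penalty edge then closes it into `s₀`;
so `s₀` must be underfull whenever some center is overfull. -/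
theorem exists_walk_start (hAB : A ≠ B) :
    ∃ s₀, (∃ e, A e = s₀ ∧ B e ≠ s₀) ∧ occ B s₀ ≤ occ A s₀ ∧
      ((∃ s, occ A s < occ B s) → occ B s₀ < occ A s₀) := by
  by_cases hdef : ∃ s, occ B s < occ A s
  · obtain ⟨s, hs⟩ := hdef
    exact ⟨s, exists_leaving_of_occ_lt hs, hs.le, fun _ => hs⟩
  · push Not at hdef
    have heq : ∀ s, occ A s = occ B s := fun s =>
      (Finset.sum_eq_sum_iff_of_le fun s _ => hdef s).1 (by rw [sum_occ, sum_occ]) s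
        (Finset.mem_univ s)
    obtain ⟨e, he⟩ := Function.ne_iff.1 hAB
    exact ⟨A e, ⟨e, rfl, Ne.symm he⟩, (heq _).ge, fun ⟨s, hs⟩ => absurd (heq s) hs.ne⟩

theorem exists_loop_transfersTo (hAB : A ≠ B) :
    ∃ L : Loop S E, IsLoop A L ∧ L.TransfersTo B ∧ ∀ t, L.dem t = none →
      occ A (L.vtx t) < occ B (L.vtx t) ∧ occ B (L.vtx (cnext t)) < occ A (L.vtx (cnext t)) := by
  obtain ⟨s₀, hout, hs₀, hdef⟩ := exists_walk_start hAB
  obtain ⟨x, de, rfl, hwalk⟩ := exists_walk hout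
  obtain ⟨L, hL, hT, hpen⟩ := exists_loop_of_walk x de hwalk hs₀
  refine ⟨L, hL, hT, fun t ht => ?_⟩
  obtain ⟨hsur, hback⟩ := hpen t ht
  rw [hback]
  exact ⟨hsur, hdef ⟨_, hsur⟩⟩

end Decomposition

section Revert

variable {E S : Type*} [DecidableEq E] {A B : E → S} {L : Loop S E}

def Loop.revert (A B : E → S) (L : Loop S E) : E → S := fun e =>
  if ∃ t, L.dem t = some e then A e else B e

theorem IsLoop.revert (hL : IsLoop A L) : IsLoop (L.revert A B) L :=
  hL.of_tail fun t e h => by rw [Loop.revert, if_pos ⟨t, h⟩, hL.tail h]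

theorem revert_of_forall_ne {e : E} (h : ∀ t, L.dem t ≠ some e) : L.revert A B e = B e :=
  if_neg (not_exists.2 h)

theorem removeLoop_revert (hL : IsLoop A L) (hT : L.TransfersTo B) :
    removeLoop (L.revert A B) L = B := by
  funext e
  by_cases he : ∃ t, L.dem t = some e
  · obtain ⟨t, ht⟩ := he
    rw [removeLoop_of_dem hL.revert ht, hT t e ht]
  · rw [removeLoop_of_forall_ne (not_exists.1 he), revert_of_forall_ne (not_exists.1 he)]

variable [Fintype E] [DecidableEq S]

theorem card_revert_ne_lt (hL : IsLoop A L) (hT : L.TransfersTo B) :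
    #{e | L.revert A B e ≠ A e} < #{e | B e ≠ A e} := by
  obtain ⟨t, e, he⟩ := hL.exists_transfer
  refine Finset.card_lt_card ((Finset.ssubset_iff_of_subset fun e' he' => ?_).2
    ⟨e, by simpa using hL.ne_of_transfersTo hT he, by
      simp [Loop.revert, show ∃ t, L.dem t = some e from ⟨t, he⟩]⟩)
  by_cases h : ∃ t, L.dem t = some e' <;> simp_all [Loop.revert]

theorem occ_revert_add (hL : IsLoop A L) (hT : L.TransfersTo B) {t₀ : Fin L.m}
    (h₀ : L.dem t₀ = none) (s : S) :
    occ B s + (if L.vtx (cnext t₀) = s then 1 else 0) =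
      occ (L.revert A B) s + if L.vtx t₀ = s then 1 else 0 := by
  have h := occ_removeLoop_add (hL.revert (B := B)) h₀ s
  rwa [removeLoop_revert hL hT] at h

theorem occ_revert_penalty (hL : IsLoop A L) (hT : L.TransfersTo B) {t : Fin L.m}
    (ht : L.dem t = none) :
    occ B (L.vtx t) = occ (L.revert A B) (L.vtx t) + 1 ∧
      occ (L.revert A B) (L.vtx (cnext t)) = occ B (L.vtx (cnext t)) + 1 := by
  have h1 := occ_revert_add hL hT ht (L.vtx t)
  have h2 := occ_revert_add hL hT ht (L.vtx (cnext t))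
  have hne := hL.vtx_ne_cnext t
  rw [if_neg (Ne.symm hne), if_pos rfl] at h1
  rw [if_pos rfl, if_neg hne] at h2
  omega

theorem occ_revert_of_forall_ne_none (hL : IsLoop A L) (hT : L.TransfersTo B)
    (h : ∀ t, L.dem t ≠ none) (s : S) : occ (L.revert A B) s = occ B s := by
  have h' := occ_removeLoop_of_forall_ne_none (hL.revert (B := B)) h s
  rwa [removeLoop_revert hL hT, eq_comm] at h'

theorem occ_revert_lt_iff (hL : IsLoop A L) (hT : L.TransfersTo B)
    (hpen : ∀ t, L.dem t = none →
      occ A (L.vtx t) < occ B (L.vtx t) ∧ occ B (L.vtx (cnext t)) < occ A (L.vtx (cnext t)))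
    {s : S} (hs : ∀ t, L.dem t = none → L.vtx (cnext t) = s → occ B s + 1 ≠ occ A s) :
    occ (L.revert A B) s < occ A s ↔ occ B s < occ A s := by
  by_cases hpath : ∃ t₀, L.dem t₀ = none
  · obtain ⟨t₀, h₀⟩ := hpath
    obtain ⟨hsl, hsh⟩ := hpen t₀ h₀
    have hocc := occ_revert_add hL hT h₀ s
    have hne := hL.vtx_ne_cnext t₀
    by_cases h1 : L.vtx t₀ = s
    · subst h1
      rw [if_neg (Ne.symm hne), if_pos rfl] at hocc
      omega
    · by_cases h2 : L.vtx (cnext t₀) = s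
      · have := hs t₀ h₀ h2
        subst h2
        rw [if_pos rfl, if_neg hne] at hocc
        omega
      · rw [if_neg h1, if_neg h2] at hocc
        omega
  · rw [occ_revert_of_forall_ne_none hL hT (not_exists.1 hpath)]

theorem loopCost_le_loopCost_revert (CM : E → S → ℤ) {p : S → ℕ → ℤ}
    (hp : ∀ s, Monotone (p s)) (hL : IsLoop A L) (hT : L.TransfersTo B) {X : E → S}
    (hX : ∀ t, L.dem t = none →
      occ X (L.vtx t) < occ B (L.vtx t) ∧ occ B (L.vtx (cnext t)) < occ X (L.vtx (cnext t))) :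
    loopCost CM p X L ≤ loopCost CM p (L.revert A B) L :=
  loopCost_le_loopCost CM hp fun t ht => by
    have := occ_revert_penalty hL hT ht
    have := hX t ht
    omega

end Revert

theorem loopCost_restrict_le_loopCost_revert {E S : Type*} [Fintype E] [DecidableEq E]
    [DecidableEq S] (CM : Option E → S → ℤ) {p : S → ℕ → ℤ} (hp : ∀ s, Monotone (p s))
    {A B : Option E → S} {L : Loop S (Option E)} (hL : IsLoop A L) (hT : L.TransfersTo B)
    (hnone : B none = A none) {X : E → S}
    (hX : ∀ t, L.dem t = none →
      occ X (L.vtx t) < occ B (L.vtx t) ∧ occ B (L.vtx (cnext t)) < occ X (L.vtx (cnext t))) :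
    loopCost (fun e => CM (some e)) p X L.restrict ≤ loopCost CM p (L.revert A B) L :=
  loopCost_restrict_le CM hp (hL.dem_ne_some_of_eq hT hnone) fun t ht => by
    have := occ_revert_penalty hL hT ht
    have := hX t ht
    omega

section Insertion

variable {D S : Type*} [Fintype D] [DecidableEq S]

def Loop.ClosesInto (L : Loop S D) (s : S) : Prop :=
  ∃ t, L.dem t = none ∧ L.vtx (cnext t) = s

theorem occ_option (X : Option D → S) (s : S) :
    occ X s = occ (fun d => X (some d)) s + if X none = s then 1 else 0 := by
  have h := occ_eq_sum X s
  rw [Fintype.sum_option, ← occ_eq_sum (fun d => X (some d))] at h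
  split_ifs at h ⊢ <;> omega

theorem occ_le_card_add_one (X : Option D → S) (s : S) : occ X s ≤ Fintype.card D + 1 := by
  unfold occ
  simpa using Finset.card_filter_le (Finset.univ : Finset (Option D)) (X · = s)

variable {CM : Option D → S → ℤ} {p : S → ℕ → ℤ} {A : Option D → S} {sj : S}

theorem cost_add_one_le_of_ne [Fintype S] {M : ℤ} (hp : ∀ s j, 0 ≤ p s j)
    (hM : M = 1 + (∑ d, ∑ s, |CM (some d) s|) +
      ∑ s, ∑ j ∈ Finset.Icc 1 (Fintype.card D + 1), |p s j|)
    (hCj : CM none sj = 0) (hCo : ∀ s, s ≠ sj → CM none s = M) (hA : A none = sj)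
    {B : Option D → S} (hB : B none ≠ sj) : cost CM p A + 1 ≤ cost CM p B := by
  have htransfer : M - ∑ d, ∑ s, |CM (some d) s| ≤ ∑ o, CM o (B o) - ∑ o, CM o (A o) := by
    rw [Fintype.sum_option, Fintype.sum_option, hA, hCj, hCo _ hB]
    have := Finset.sum_le_sum fun d (_ : d ∈ Finset.univ) =>
      neg_sum_abs_le_sub (CM (some d)) (B (some d)) (A (some d))
    rw [Finset.sum_neg_distrib, Finset.sum_sub_distrib] at this
    linarith
  have hpenB : 0 ≤ ∑ s, ∑ j ∈ Finset.Icc 1 (occ B s), p s j :=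
    Finset.sum_nonneg fun s _ => Finset.sum_nonneg fun j _ => hp s j
  have hpenA : ∑ s, ∑ j ∈ Finset.Icc 1 (occ A s), p s j ≤
      ∑ s, ∑ j ∈ Finset.Icc 1 (Fintype.card D + 1), |p s j| :=
    Finset.sum_le_sum fun s _ => (Finset.sum_le_sum fun j _ => le_abs_self _).trans
      (Finset.sum_le_sum_of_subset_of_nonneg
        (Finset.Icc_subset_Icc_right (occ_le_card_add_one A s)) fun _ _ _ => abs_nonneg _)
  rw [cost, cost]
  linarith

variable [DecidableEq D]

theorem loopCost_revert_nonneg (hp : ∀ s, Monotone (p s))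
    (hA1 : ¬ InducesNegLoop (fun d => CM (some d)) p (fun d => A (some d)))
    (hA : A none = sj) {B : Option D → S} (hB : B none = sj) {L : Loop S (Option D)}
    (hL : IsLoop A L) (hT : L.TransfersTo B)
    (hpen : ∀ t, L.dem t = none →
      occ A (L.vtx t) < occ B (L.vtx t) ∧ occ B (L.vtx (cnext t)) < occ A (L.vtx (cnext t)))
    (hsj : ∀ t, L.dem t = none → L.vtx (cnext t) = sj → occ B sj + 1 ≠ occ A sj) :
    0 ≤ loopCost CM p (L.revert A B) L := by
  have hnone : B none = A none := hB.trans hA.symm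
  have hA1L : 0 ≤ loopCost (fun d => CM (some d)) p (fun d => A (some d)) L.restrict :=
    not_lt.1 fun h => hA1 ⟨_, hL.restrict (hL.dem_ne_some_of_eq hT hnone), h⟩
  refine hA1L.trans (loopCost_restrict_le_loopCost_revert CM hp hL hT hnone fun t ht => ?_)
  have hl := occ_option A (L.vtx t)
  have hh := occ_option A (L.vtx (cnext t))
  obtain ⟨hsl, hsh⟩ := hpen t ht
  rw [hA] at hl hh
  refine ⟨by split_ifs at hl <;> omega, ?_⟩
  by_cases h : L.vtx (cnext t) = sj
  · have := hsj t ht h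
    subst h
    rw [if_pos rfl] at hh
    omega
  · rw [if_neg (Ne.symm h)] at hh
    omega

theorem ite_le_ite_add_loopCost_revert (hp : ∀ s, Monotone (p s))
    (hA1 : ¬ InducesNegLoop (fun d => CM (some d)) p (fun d => A (some d))) {κ : ℤ}
    (hκ : ∀ L, IsLoop A L → L.ClosesInto sj → κ ≤ loopCost CM p A L)
    (hA : A none = sj) {B : Option D → S} (hB : B none = sj) {L : Loop S (Option D)}
    (hL : IsLoop A L) (hT : L.TransfersTo B)
    (hpen : ∀ t, L.dem t = none →
      occ A (L.vtx t) < occ B (L.vtx t) ∧ occ B (L.vtx (cnext t)) < occ A (L.vtx (cnext t))) :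
    (if occ B sj < occ A sj then κ else 0) ≤
      (if occ (L.revert A B) sj < occ A sj then κ else 0) + loopCost CM p (L.revert A B) L := by
  -- only the path that refills the last missing unit of `sj` is charged against `κ`
  by_cases hlast : ∃ t₀, L.dem t₀ = none ∧ L.vtx (cnext t₀) = sj ∧ occ B sj + 1 = occ A sj
  · obtain ⟨t₀, h₀, hshj, hlast⟩ := hlast
    have hκL := hκ L hL ⟨t₀, h₀, hshj⟩
    have hle := loopCost_le_loopCost_revert CM hp hL hT hpen
    have hocc := occ_revert_add hL hT h₀ sj
    rw [if_pos hshj, if_neg fun h => hL.vtx_ne_cnext t₀ (h.trans hshj.symm)] at hocc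
    rw [if_pos (by omega), if_neg (by omega)]
    linarith
  · push Not at hlast
    rw [if_congr (occ_revert_lt_iff hL hT hpen hlast) rfl rfl]
    linarith [loopCost_revert_nonneg hp hA1 hA hB hL hT hpen hlast]

variable [Fintype S]

theorem cost_add_ite_le (hp : ∀ s, Monotone (p s))
    (hA1 : ¬ InducesNegLoop (fun d => CM (some d)) p (fun d => A (some d))) {κ : ℤ}
    (hκ : ∀ L, IsLoop A L → L.ClosesInto sj → κ ≤ loopCost CM p A L)
    (hA : A none = sj) (B : Option D → S) (hB : B none = sj) :
    cost CM p A + (if occ B sj < occ A sj then κ else 0) ≤ cost CM p B := by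
  induction hn : #{o | B o ≠ A o} using Nat.strong_induction_on generalizing B with
  | _ n ih =>
  by_cases hBA : B = A
  · subst hBA
    simp
  obtain ⟨L, hL, hT, hpen⟩ := exists_loop_transfersTo (Ne.symm hBA)
  have hcost : cost CM p B = cost CM p (L.revert A B) + loopCost CM p (L.revert A B) L := by
    rw [← cost_removeLoop CM p hL.revert, removeLoop_revert hL hT]
  have hB' : L.revert A B none = sj := by
    rw [revert_of_forall_ne (hL.dem_ne_some_of_eq hT (hB.trans hA.symm)), hB]
  have hIH := ih _ (hn ▸ card_revert_ne_lt hL hT) _ hB' rfl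
  have hstep := ite_le_ite_add_loopCost_revert hp hA1 hκ hA hB hL hT hpen
  linarith

theorem cost_add_le {M : ℤ} (hp : ∀ s, Monotone (p s)) (hp₀ : ∀ s j, 0 ≤ p s j)
    (hA1 : ¬ InducesNegLoop (fun d => CM (some d)) p (fun d => A (some d)))
    (hM : M = 1 + (∑ d, ∑ s, |CM (some d) s|) +
      ∑ s, ∑ j ∈ Finset.Icc 1 (Fintype.card D + 1), |p s j|)
    (hCj : CM none sj = 0) (hCo : ∀ s, s ≠ sj → CM none s = M) (hA : A none = sj)
    {κ : ℤ} (hκ₀ : κ ≤ 0) (hκ : ∀ L, IsLoop A L → L.ClosesInto sj → κ ≤ loopCost CM p A L)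
    (B : Option D → S) : cost CM p A + κ ≤ cost CM p B := by
  by_cases hB : B none = sj
  · have := cost_add_ite_le hp hA1 hκ hA B hB
    split_ifs at this <;> linarith
  · have := cost_add_one_le_of_ne hp₀ hM hCj hCo hA hB
    linarith

end Insertion

/-- let `A1` induce no negative loop and let `sj` be a service
center.  Extend the instance by a new demand unit `d*` (modelled as
`none : Option D`) with `CM2 d* sj = 0` and `CM2 d* s = M` for `s ≠ sj`, where
`M = 1 + Σ|CM| + Σ_s Σ_{j=1}^{|D|+1} |p s j|`, and let `A2` extend `A1` by
assigning `d*` to `sj`.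
(a) If every loop of `A2` beginning at `sj` whose closing edge is a penalty
transfer edge directed into `sj` has nonnegative cost, then `A2` induces no
negative loop.
(b) If `Cmin` is such a loop of minimum cost and its cost is negative, then
removing `Cmin` yields an allotment inducing no negative loop. -/
theorem restore_optimality_after_insertion
    (D S : Type) [Fintype D] [DecidableEq D] [Fintype S] [DecidableEq S]
    (CM : D → S → ℤ) (c : S → ℕ) (p : S → ℕ → ℤ)
    (hp0 : ∀ s j, j ≤ c s → p s j = 0)
    (hppos : ∀ s j, c s < j → 0 < p s j)
    (hpmono : ∀ s j, c s < j → p s j ≤ p s (j + 1))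
    (A1 : D → S) (sj : S)
    (hA1 : ¬ InducesNegLoop CM p A1)
    (M : ℤ)
    (hM : M = 1 + (∑ d, ∑ s, |CM d s|) +
        ∑ s, ∑ j ∈ Finset.Icc 1 (Fintype.card D + 1), |p s j|)
    (CM2 : Option D → S → ℤ)
    (hCM2s : ∀ d s, CM2 (some d) s = CM d s)
    (hCM2j : CM2 none sj = 0)
    (hCM2o : ∀ s, s ≠ sj → CM2 none s = M)
    (A2 : Option D → S)
    (hA2s : ∀ d, A2 (some d) = A1 d)
    (hA2n : A2 none = sj) :
    ((∀ L : Loop S (Option D), IsLoop A2 L →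
        (∃ t, L.dem t = none ∧ L.vtx (cnext t) = sj) →
        0 ≤ loopCost CM2 p A2 L) → ¬ InducesNegLoop CM2 p A2) ∧
    (∀ Cmin : Loop S (Option D), IsLoop A2 Cmin →
        (∃ t, Cmin.dem t = none ∧ Cmin.vtx (cnext t) = sj) →
        (∀ L : Loop S (Option D), IsLoop A2 L →
          (∃ t, L.dem t = none ∧ L.vtx (cnext t) = sj) →
          loopCost CM2 p A2 Cmin ≤ loopCost CM2 p A2 L) →
        loopCost CM2 p A2 Cmin < 0 →
        ¬ InducesNegLoop CM2 p (removeLoop A2 Cmin)) := by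
  obtain rfl : CM = fun d s => CM2 (some d) s := funext₂ fun d s => (hCM2s d s).symm
  obtain rfl : A1 = fun d => A2 (some d) := funext fun d => (hA2s d).symm
  have hmono := monotone_penalty hp0 hppos hpmono
  have hnonneg : ∀ s j, 0 ≤ p s j := fun s j =>
    hp0 s 0 (Nat.zero_le _) ▸ hmono s (Nat.zero_le j)
  have hopt := fun κ => cost_add_le (κ := κ) hmono hnonneg hA1 hM hCM2j hCM2o hA2n
  refine ⟨fun h => not_inducesNegLoop_of_forall_cost_le fun B => ?_,
    fun Cmin hC _ hmin hneg => not_inducesNegLoop_of_forall_cost_le fun B => ?_⟩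
  · simpa using hopt 0 le_rfl h B
  · rw [cost_removeLoop CM2 p hC]
    exact hopt _ hneg.le hmin B
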